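/- Let G_1, G_2 be simple graphs on n_1, n_2 vertices, with complements Ḡ_1, Ḡ_2. Then the complement of the disjoint union G_1 ⊕ G_2 equals the join Ḡ_1 ∨ Ḡ_2; consequently, the signless Laplacian characteristic polynomial of G_1 ∨ G_2 on n = n_1 + n_2 vertices equals f_{Q(G_1∨G_2)}(λ) = (-1)^{n_2} f_{Q_1}(λ - n_2) f_{Q̄_2}(n - λ - 2) + (-1)^{n_1} f_{Q_2}(λ - n_1) f_{Q̄_1}(n - λ - 2) - (-1)^{n_1+n_2} f_{Q̄_1}(n - λ - 2) f_{Q̄_2}(n - λ - 2). -/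

import Mathlib

open Matrix BigOperators

/-- The signless Laplacian `Q(G) = D(G) + A(G)` of a simple graph. -/
def signlessLaplacian {V : Type*} [Fintype V] [DecidableEq V]
    (G : SimpleGraph V) [DecidableRel G.Adj] : Matrix V V ℝ :=
  Matrix.diagonal (fun v => (G.degree v : ℝ)) + G.adjMatrix ℝ

instance {α β : Type*} (G1 : SimpleGraph α) (G2 : SimpleGraph β)
    [DecidableRel G1.Adj] [DecidableRel G2.Adj] : DecidableRel (G1 ⊕g G2).Adj := fun x y => by
  cases x <;> cases y <;> simp only [SimpleGraph.sum_adj] <;> infer_instance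

/-- The join `G1 ∨ G2` of two graphs: the disjoint union together with all edges between
the two vertex sets.  Equivalently, the complement of the disjoint sum of the complements. -/
def gJoin {α β : Type*} (G1 : SimpleGraph α) (G2 : SimpleGraph β) : SimpleGraph (α ⊕ β) :=
  (G1ᶜ ⊕g G2ᶜ)ᶜ

instance {α β : Type*} [DecidableEq α] [DecidableEq β]
    (G1 : SimpleGraph α) (G2 : SimpleGraph β)
    [DecidableRel G1.Adj] [DecidableRel G2.Adj] : DecidableRel (gJoin G1 G2).Adj :=
  inferInstanceAs (DecidableRel (G1ᶜ ⊕g G2ᶜ)ᶜ.Adj)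

/-!
Order the vertices of `G1 ∨ G2` as `V(G1) ⊔ V(G2)` and let `J` be an all-ones block. Then
`λI - Q(G1 ∨ G2) = [[A, -J], [-J, B]]` with `A = (λ - n2)I - Q1` and `B = (λ - n1)I - Q2`, and
since `Q(Ḡ) = (|V| - 2)I - Q(G) + J`, also `(n - λ - 2)I - Q̄1 = -(A + J)` and
`(n - λ - 2)I - Q̄2 = -(B + J)`. It remains to show
`det [[A, -J], [-J, B]] = det A det (B + J) + det B det (A + J) - det (A + J) det (B + J)`.
For invertible `A`, `B` this follows from the Schur complement, `J A⁻¹ J = (1ᵀA⁻¹1) J`, and the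
matrix determinant lemma `det (A + J) = det A (1 + 1ᵀA⁻¹1)`. Over an integral domain `R` in general,
apply it to `X • 1 + A` and `X • 1 + B`, whose determinants are monic, over the fraction field of
`R[X]`, and evaluate at `X = 0`.
-/

open Polynomial

namespace Matrix

variable {m p R : Type*} [CommRing R]

theorem map_vecMulVec_one {S : Type*} [CommRing S] (f : R →+* S) :
    (vecMulVec (1 : m → R) (1 : p → R)).map f = vecMulVec 1 1 := by
  ext; simp

theorem map_neg_vecMulVec_one {S : Type*} [CommRing S] (f : R →+* S) :
    (-vecMulVec (1 : m → R) (1 : p → R)).map f = -vecMulVec 1 1 := by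
  ext; simp

variable [Fintype m] [DecidableEq m] [Fintype p] [DecidableEq p]

theorem det_add_vecMulVec {A : Matrix m m R} (hA : IsUnit A.det) (u v : m → R) :
    (A + vecMulVec u v).det = A.det * (1 + v ⬝ᵥ A⁻¹ *ᵥ u) := by
  rw [vecMulVec_eq Unit, det_add_replicateCol_mul_replicateRow hA]
  congr 1
  rw [det_unique, add_apply, one_apply_eq, ← replicateRow_vecMul,
    replicateRow_mul_replicateCol_apply, dotProduct_mulVec]

theorem det_fromBlocks_neg_ones_of_isUnit {A : Matrix m m R} {B : Matrix p p R}
    (hA : IsUnit A.det) (hB : IsUnit B.det) :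
    (fromBlocks A (-vecMulVec 1 1) (-vecMulVec 1 1) B).det =
      A.det * (B + vecMulVec 1 1).det + B.det * (A + vecMulVec 1 1).det
        - (A + vecMulVec 1 1).det * (B + vecMulVec 1 1).det := by
  have := A.invertibleOfIsUnitDet hA
  have hschur : vecMulVec (1 : p → R) (1 : m → R) * A⁻¹ * vecMulVec (1 : m → R) (1 : p → R)
      = vecMulVec ((1 ⬝ᵥ A⁻¹ *ᵥ 1) • (1 : p → R)) 1 := by
    rw [Matrix.mul_assoc, mul_vecMulVec, vecMulVec_mul_vecMulVec, vecMulVec_smul,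
      smul_vecMulVec]
  rw [det_fromBlocks₁₁, invOf_eq_nonsing_inv]
  simp only [Matrix.neg_mul, Matrix.mul_neg, neg_neg]
  rw [hschur, sub_eq_add_neg, ← neg_vecMulVec, det_add_vecMulVec hA, det_add_vecMulVec hB,
    det_add_vecMulVec hB, mulVec_neg, mulVec_smul, dotProduct_neg, dotProduct_smul, smul_eq_mul]
  ring

theorem isUnit_det_map_X_smul_one_add_C [IsDomain R] (M : Matrix m m R) :
    IsUnit (((X : R[X]) • 1 + M.map C).map (algebraMap R[X] (FractionRing R[X]))).det := by
  rw [← RingHom.mapMatrix_apply, ← RingHom.map_det, isUnit_iff_ne_zero,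
    map_ne_zero_iff _ (IsFractionRing.injective R[X] _)]
  exact Monic.ne_zero (leadingCoeff_det_X_one_add_C M)

theorem det_fromBlocks_neg_ones [IsDomain R] (A : Matrix m m R) (B : Matrix p p R) :
    (fromBlocks A (-vecMulVec 1 1) (-vecMulVec 1 1) B).det =
      A.det * (B + vecMulVec 1 1).det + B.det * (A + vecMulVec 1 1).det
        - (A + vecMulVec 1 1).det * (B + vecMulVec 1 1).det := by
  set A' : Matrix m m R[X] := (X : R[X]) • 1 + A.map C
  set B' : Matrix p p R[X] := (X : R[X]) • 1 + B.map C
  have hpoly : (fromBlocks A' (-vecMulVec 1 1) (-vecMulVec 1 1) B').det =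
      A'.det * (B' + vecMulVec 1 1).det + B'.det * (A' + vecMulVec 1 1).det
        - (A' + vecMulVec 1 1).det * (B' + vecMulVec 1 1).det := by
    apply IsFractionRing.injective R[X] (FractionRing R[X])
    simp only [map_sub, map_add, map_mul, RingHom.map_det, RingHom.mapMatrix_apply, fromBlocks_map,
      map_vecMulVec_one, map_neg_vecMulVec_one]
    exact det_fromBlocks_neg_ones_of_isUnit (isUnit_det_map_X_smul_one_add_C A)
      (isUnit_det_map_X_smul_one_add_C B)
  have hA : A'.map (evalRingHom 0) = A := by ext i j; by_cases h : i = j <;> simp [A', h]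
  have hB : B'.map (evalRingHom 0) = B := by ext i j; by_cases h : i = j <;> simp [B', h]
  simpa only [map_sub, map_add, map_mul, RingHom.map_det, RingHom.mapMatrix_apply, fromBlocks_map,
    map_vecMulVec_one, map_neg_vecMulVec_one, hA, hB] using congrArg (evalRingHom 0) hpoly

end Matrix

theorem signlessLaplacian_compl {V : Type*} [Fintype V] [DecidableEq V] (G : SimpleGraph V)
    [DecidableRel G.Adj] :
    signlessLaplacian Gᶜ =
      ((Fintype.card V : ℝ) - 2) • 1 - signlessLaplacian G + vecMulVec 1 1 := by
  ext v w
  by_cases h : v = w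
  · subst h
    have hlt := G.degree_lt_card_verts v
    have hdeg : (Gᶜ.degree v : ℝ) = Fintype.card V - 1 - G.degree v := by
      rw [SimpleGraph.degree_compl, Nat.cast_sub (Nat.le_sub_one_of_lt hlt),
        Nat.cast_sub (Nat.one_le_of_lt hlt), Nat.cast_one]
    simp only [signlessLaplacian, Matrix.add_apply, Matrix.sub_apply, Matrix.smul_apply,
      diagonal_apply_eq, one_apply_eq, hdeg, SimpleGraph.adjMatrix_apply, SimpleGraph.irrefl,
      ↓reduceIte, vecMulVec_apply, Pi.one_apply, smul_eq_mul]
    ring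
  · by_cases hadj : G.Adj v w <;> simp [signlessLaplacian, h, hadj]

section gJoin

variable {α β : Type*} (G1 : SimpleGraph α) (G2 : SimpleGraph β)

@[simp] theorem gJoin_adj_inl_inl {a a' : α} :
    (gJoin G1 G2).Adj (.inl a) (.inl a') ↔ G1.Adj a a' := by
  simp only [gJoin, SimpleGraph.compl_adj, ne_eq, Sum.inl.injEq, SimpleGraph.sum_adj, not_and,
    not_not]
  exact ⟨fun h => h.2 h.1, fun h => ⟨h.ne, fun _ => h⟩⟩

@[simp] theorem gJoin_adj_inr_inr {b b' : β} :
    (gJoin G1 G2).Adj (.inr b) (.inr b') ↔ G2.Adj b b' := by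
  simp only [gJoin, SimpleGraph.compl_adj, ne_eq, Sum.inr.injEq, SimpleGraph.sum_adj, not_and,
    not_not]
  exact ⟨fun h => h.2 h.1, fun h => ⟨h.ne, fun _ => h⟩⟩

@[simp] theorem gJoin_adj_inl_inr (a : α) (b : β) : (gJoin G1 G2).Adj (.inl a) (.inr b) := by
  simp [gJoin]

@[simp] theorem gJoin_adj_inr_inl (a : α) (b : β) : (gJoin G1 G2).Adj (.inr b) (.inl a) := by
  simp [gJoin]

variable [Fintype α] [Fintype β] [DecidableEq α] [DecidableEq β] [DecidableRel G1.Adj]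
  [DecidableRel G2.Adj]

theorem gJoin_neighborFinset_inl (a : α) :
    (gJoin G1 G2).neighborFinset (.inl a) = (G1.neighborFinset a).disjSum Finset.univ := by
  ext (a' | b) <;> simp

theorem gJoin_neighborFinset_inr (b : β) :
    (gJoin G1 G2).neighborFinset (.inr b) = Finset.univ.disjSum (G2.neighborFinset b) := by
  ext (a | b') <;> simp

theorem gJoin_degree_inl (a : α) :
    (gJoin G1 G2).degree (.inl a) = G1.degree a + Fintype.card β := by
  rw [← SimpleGraph.card_neighborFinset_eq_degree, gJoin_neighborFinset_inl, Finset.card_disjSum,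
    SimpleGraph.card_neighborFinset_eq_degree, Finset.card_univ]

theorem gJoin_degree_inr (b : β) :
    (gJoin G1 G2).degree (.inr b) = Fintype.card α + G2.degree b := by
  rw [← SimpleGraph.card_neighborFinset_eq_degree, gJoin_neighborFinset_inr, Finset.card_disjSum,
    SimpleGraph.card_neighborFinset_eq_degree, Finset.card_univ]

theorem signlessLaplacian_gJoin :
    signlessLaplacian (gJoin G1 G2) =
      fromBlocks (signlessLaplacian G1 + (Fintype.card β : ℝ) • 1) (vecMulVec 1 1)
        (vecMulVec 1 1) (signlessLaplacian G2 + (Fintype.card α : ℝ) • 1) := by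
  ext (a | b) (a' | b')
  · by_cases h : a = a' <;> simp [signlessLaplacian, h, gJoin_degree_inl, one_apply]
  · simp [signlessLaplacian]
  · simp [signlessLaplacian]
  · by_cases h : b = b' <;> simp [signlessLaplacian, h, gJoin_degree_inr, one_apply, add_comm]

end gJoin

/-- The complement of the disjoint union `G1 ⊕ G2` is the join
`Ḡ1 ∨ Ḡ2`; consequently the signless Laplacian characteristic polynomial of the join
`G1 ∨ G2` on `n = n1 + n2` vertices satisfies, for all `lam`,
`f_{Q(G1∨G2)}(lam) = (-1)^{n2} f_{Q1}(lam - n2) f_{Q̄2}(n - lam - 2)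
  + (-1)^{n1} f_{Q2}(lam - n1) f_{Q̄1}(n - lam - 2)
  - (-1)^{n1+n2} f_{Q̄1}(n - lam - 2) f_{Q̄2}(n - lam - 2)`. -/
theorem compl_sum_and_charpoly_join {n1 n2 : ℕ}
    (G1 : SimpleGraph (Fin n1)) (G2 : SimpleGraph (Fin n2))
    [DecidableRel G1.Adj] [DecidableRel G2.Adj] :
    (G1 ⊕g G2)ᶜ = gJoin G1ᶜ G2ᶜ ∧
    ∀ lam : ℝ,
      (lam • (1 : Matrix (Fin n1 ⊕ Fin n2) (Fin n1 ⊕ Fin n2) ℝ) -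
          signlessLaplacian (gJoin G1 G2)).det =
        (-1) ^ n2 * (((lam - n2) • (1 : Matrix (Fin n1) (Fin n1) ℝ) -
              signlessLaplacian G1).det) *
            ((((n1 : ℝ) + n2 - lam - 2) • (1 : Matrix (Fin n2) (Fin n2) ℝ) -
              signlessLaplacian G2ᶜ).det) +
        (-1) ^ n1 * (((lam - n1) • (1 : Matrix (Fin n2) (Fin n2) ℝ) -
              signlessLaplacian G2).det) *
            ((((n1 : ℝ) + n2 - lam - 2) • (1 : Matrix (Fin n1) (Fin n1) ℝ) -
              signlessLaplacian G1ᶜ).det) -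
        (-1) ^ (n1 + n2) *
            ((((n1 : ℝ) + n2 - lam - 2) • (1 : Matrix (Fin n1) (Fin n1) ℝ) -
              signlessLaplacian G1ᶜ).det) *
            ((((n1 : ℝ) + n2 - lam - 2) • (1 : Matrix (Fin n2) (Fin n2) ℝ) -
              signlessLaplacian G2ᶜ).det) := by
  refine ⟨by rw [gJoin, compl_compl, compl_compl], fun lam => ?_⟩
  have hjoin : lam • 1 - signlessLaplacian (gJoin G1 G2) =
      fromBlocks ((lam - n2) • 1 - signlessLaplacian G1) (-vecMulVec 1 1) (-vecMulVec 1 1)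
        ((lam - n1) • 1 - signlessLaplacian G2) := by
    rw [signlessLaplacian_gJoin, ← fromBlocks_one, fromBlocks_smul, sub_eq_add_neg,
      fromBlocks_neg, fromBlocks_add, Fintype.card_fin, Fintype.card_fin]
    congr 1 <;> module
  have hcompl1 : ((n1 : ℝ) + n2 - lam - 2) • 1 - signlessLaplacian G1ᶜ =
      -((lam - n2) • 1 - signlessLaplacian G1 + vecMulVec 1 1) := by
    rw [signlessLaplacian_compl, Fintype.card_fin]; module
  have hcompl2 : ((n1 : ℝ) + n2 - lam - 2) • 1 - signlessLaplacian G2ᶜ =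
      -((lam - n1) • 1 - signlessLaplacian G2 + vecMulVec 1 1) := by
    rw [signlessLaplacian_compl, Fintype.card_fin]; module
  rw [hjoin, hcompl1, hcompl2, det_neg, det_neg, Fintype.card_fin, Fintype.card_fin,
    det_fromBlocks_neg_ones, pow_add]
  generalize ((lam - n2) • 1 - signlessLaplacian G1).det = a
  generalize ((lam - n1) • 1 - signlessLaplacian G2).det = b
  generalize ((lam - n2) • 1 - signlessLaplacian G1 + vecMulVec 1 1).det = a'
  generalize ((lam - n1) • 1 - signlessLaplacian G2 + vecMulVec 1 1).det = b'
  have hsq (k : ℕ) : (-1 : ℝ) ^ k * (-1) ^ k = 1 := by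
    rw [← mul_pow, neg_one_mul, neg_neg, one_pow]
  linear_combination -a * b' * hsq n2 - b * a' * hsq n1
    + a' * b' * ((-1) ^ n2 * (-1) ^ n2 * hsq n1 + hsq n2)
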